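/- Let G be a simple graph on n vertices with m edges, and let q_n(G) be the smallest eigenvalue of the signless Laplacian Q(G). Then the maximum cut satisfies mcut(G) ≤ m - n·q_n(G)/4. -/

import Mathlib

open Finset Matrix BigOperators

set_option linter.unusedSectionVars false

variable {V : Type*} [Fintype V] [DecidableEq V]

/-- Number of edges of `G` with exactly one endpoint in `S` (each unordered edge counted once,
as the ordered pair going out of `S`). -/
def cutNum (G : SimpleGraph V) [DecidableRel G.Adj] (S : Finset V) : ℕ :=
  (Finset.univ.filter (fun p : V × V => G.Adj p.1 p.2 ∧ p.1 ∈ S ∧ p.2 ∉ S)).card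

/-- Number of edges of `G` with both endpoints in `S` or both outside `S`. -/
def cohNum (G : SimpleGraph V) [DecidableRel G.Adj] (S : Finset V) : ℕ :=
  G.edgeFinset.card - cutNum G S

/-- The maximum cut of `G`. -/
def mcut (G : SimpleGraph V) [DecidableRel G.Adj] : ℕ :=
  Finset.univ.sup (fun S : Finset V => cutNum G S)

/-- The ±1 partition vector of a vertex subset `S`. -/
def pvec (S : Finset V) : V → ℝ := fun v => if v ∈ S then 1 else -1

/-- The signless Laplacian matrix `Q = D + A` of a graph. -/
def signlessLap (G : SimpleGraph V) [DecidableRel G.Adj] : Matrix V V ℝ :=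
  G.degMatrix ℝ + G.adjMatrix ℝ

lemma isHermitian_adj (G : SimpleGraph V) [DecidableRel G.Adj] :
    (G.adjMatrix ℝ).IsHermitian := by
  rw [IsHermitian, conjTranspose_eq_transpose_of_trivial]
  exact SimpleGraph.isSymm_adjMatrix G

lemma isHermitian_lap (G : SimpleGraph V) [DecidableRel G.Adj] :
    (G.lapMatrix ℝ).IsHermitian := by
  rw [IsHermitian, conjTranspose_eq_transpose_of_trivial]
  exact SimpleGraph.isSymm_lapMatrix (G := G) (R := ℝ)

lemma isHermitian_signlessLap (G : SimpleGraph V) [DecidableRel G.Adj] :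
    (signlessLap G).IsHermitian := by
  rw [IsHermitian, conjTranspose_eq_transpose_of_trivial]
  exact (SimpleGraph.isSymm_degMatrix (G := G) (R := ℝ)).add (SimpleGraph.isSymm_adjMatrix G)

/-- The spanning subgraph of `G` consisting of the edges between `S` and its complement. -/
def crossGraph (G : SimpleGraph V) (S : Finset V) : SimpleGraph V where
  Adj u v := G.Adj u v ∧ ((u ∈ S) ↔ (v ∉ S))
  symm := ⟨fun u v h => ⟨h.1.symm, by tauto⟩⟩
  loopless := ⟨fun v h => G.loopless.irrefl v h.1⟩

/-- The spanning subgraph of `G` consisting of the edges inside `S` or inside its complement. -/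
def insideGraph (G : SimpleGraph V) (S : Finset V) : SimpleGraph V where
  Adj u v := G.Adj u v ∧ ((u ∈ S) ↔ (v ∈ S))
  symm := ⟨fun u v h => ⟨h.1.symm, h.2.symm⟩⟩
  loopless := ⟨fun v h => G.loopless.irrefl v h.1⟩

instance (G : SimpleGraph V) [DecidableRel G.Adj] (S : Finset V) :
    DecidableRel (crossGraph G S).Adj := fun _ _ => inferInstanceAs (Decidable (_ ∧ _))

instance (G : SimpleGraph V) [DecidableRel G.Adj] (S : Finset V) :
    DecidableRel (insideGraph G S).Adj := fun _ _ => inferInstanceAs (Decidable (_ ∧ _))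

/-- The second largest value (with multiplicity) of a finitely indexed family of reals. -/
noncomputable def secondLargest (f : V → ℝ) : ℝ :=
  (Multiset.sort (Finset.univ.val.map f) (· ≤ ·)).getD (Fintype.card V - 2) 0

/-- The join of two graphs: disjoint union plus all edges in between. -/
def joinGraph {α β : Type*} (H₁ : SimpleGraph α) (H₂ : SimpleGraph β) :
    SimpleGraph (α ⊕ β) where
  Adj x y :=
    match x, y with
    | Sum.inl u, Sum.inl v => H₁.Adj u v
    | Sum.inr u, Sum.inr v => H₂.Adj u v
    | Sum.inl _, Sum.inr _ => True
    | Sum.inr _, Sum.inl _ => True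
  symm := ⟨by rintro (u | u) (v | v) h <;> first | exact h.symm | trivial⟩
  loopless := ⟨by
    rintro (u | u) h
    · exact H₁.loopless.irrefl u h
    · exact H₂.loopless.irrefl u h⟩

instance {α β : Type*} (H₁ : SimpleGraph α) (H₂ : SimpleGraph β)
    [DecidableRel H₁.Adj] [DecidableRel H₂.Adj] :
    DecidableRel (joinGraph H₁ H₂).Adj := fun x y =>
  match x, y with
  | Sum.inl u, Sum.inl v => inferInstanceAs (Decidable (H₁.Adj u v))
  | Sum.inr u, Sum.inr v => inferInstanceAs (Decidable (H₂.Adj u v))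
  | Sum.inl _, Sum.inr _ => inferInstanceAs (Decidable True)
  | Sum.inr _, Sum.inl _ => inferInstanceAs (Decidable True)

/-!
Take the `±1` vector `x` of a maximum cut `S`. Then `xᵀx = n`, and every edge contributes `2` to
`xᵀDx` and `±2` to `xᵀAx` (negative exactly when it is cut), so `xᵀQx = 4 (m - mcut G)`. Since
`Q - qₙ I` is positive semidefinite, `qₙ n ≤ xᵀQx`.
-/

open scoped MatrixOrder

lemma iInf_eigenvalues_mul_dotProduct_self_le {n : Type*} [Fintype n] [DecidableEq n]
    {A : Matrix n n ℝ} (hA : A.IsHermitian) (x : n → ℝ) :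
    (⨅ i, hA.eigenvalues i) * (x ⬝ᵥ x) ≤ x ⬝ᵥ A *ᵥ x := by
  have hle : algebraMap ℝ (Matrix n n ℝ) (⨅ i, hA.eigenvalues i) ≤ A := by
    rw [algebraMap_le_iff_le_spectrum hA.isSelfAdjoint, hA.spectrum_real_eq_range_eigenvalues]
    rintro _ ⟨i, rfl⟩
    exact ciInf_le (Set.finite_range _).bddBelow i
  simpa [sub_mulVec, Algebra.algebraMap_eq_smul_one, smul_mulVec, dotProduct_smul] using
    (Matrix.le_iff.1 hle).dotProduct_mulVec_nonneg x

lemma pvec_mul_self (S : Finset V) (v : V) : pvec S v * pvec S v = 1 := by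
  unfold pvec; split_ifs <;> norm_num

lemma dotProduct_pvec_self (S : Finset V) : pvec S ⬝ᵥ pvec S = Fintype.card V := by
  simp [dotProduct, pvec_mul_self]

section Cut

variable (G : SimpleGraph V) [DecidableRel G.Adj]

lemma card_filter_adj : #{p : V × V | G.Adj p.1 p.2} = 2 * #G.edgeFinset := by
  rw [← G.sum_degrees_eq_twice_card_edges, card_filter, ← univ_product_univ, sum_product]
  simp only [← G.card_neighborFinset_eq_degree, G.neighborFinset_eq_filter, card_filter]

lemma card_filter_adj_into_eq_cutNum (S : Finset V) :
    #{p : V × V | G.Adj p.1 p.2 ∧ p.1 ∉ S ∧ p.2 ∈ S} = cutNum G S := by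
  refine card_bij' (fun p _ ↦ p.swap) (fun p _ ↦ p.swap) ?_ ?_ (by simp) (by simp) <;>
  · simp only [mem_filter, mem_univ, true_and, Prod.fst_swap, Prod.snd_swap]
    exact fun p hp ↦ ⟨hp.1.symm, hp.2.2, hp.2.1⟩

lemma exists_cutNum_eq_mcut : ∃ S, cutNum G S = mcut G := by
  obtain ⟨S, -, hS⟩ := exists_mem_eq_sup univ univ_nonempty (cutNum G)
  exact ⟨S, hS.symm⟩

lemma dotProduct_pvec_degMatrix_mulVec (S : Finset V) :
    pvec S ⬝ᵥ G.degMatrix ℝ *ᵥ pvec S = 2 * #G.edgeFinset := by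
  simp_rw [SimpleGraph.dotProduct_mulVec_degMatrix, mul_assoc, pvec_mul_self, mul_one]
  exact_mod_cast G.sum_degrees_eq_twice_card_edges

lemma dotProduct_pvec_adjMatrix_mulVec (S : Finset V) :
    pvec S ⬝ᵥ G.adjMatrix ℝ *ᵥ pvec S = 2 * #G.edgeFinset - 4 * cutNum G S := by
  have hterm : ∀ p : V × V, (if G.Adj p.1 p.2 then pvec S p.1 * pvec S p.2 else 0) =
      (if G.Adj p.1 p.2 then 1 else 0) - 2 * (if G.Adj p.1 p.2 ∧ p.1 ∈ S ∧ p.2 ∉ S then 1 else 0)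
        - 2 * (if G.Adj p.1 p.2 ∧ p.1 ∉ S ∧ p.2 ∈ S then 1 else 0) := by
    rintro ⟨i, j⟩
    unfold pvec
    by_cases hij : G.Adj i j <;> by_cases hi : i ∈ S <;> by_cases hj : j ∈ S <;> simp [*] <;> ring
  rw [SimpleGraph.dotProduct_mulVec_adjMatrix, ← sum_product', univ_product_univ,
    sum_congr rfl fun p _ ↦ hterm p]
  simp only [sum_sub_distrib, ← mul_sum, sum_boole, card_filter_adj,
    card_filter_adj_into_eq_cutNum]
  push_cast [cutNum]
  ring

lemma dotProduct_pvec_signlessLap_mulVec (S : Finset V) :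
    pvec S ⬝ᵥ signlessLap G *ᵥ pvec S = 4 * #G.edgeFinset - 4 * cutNum G S := by
  rw [signlessLap, add_mulVec, dotProduct_add, dotProduct_pvec_degMatrix_mulVec,
    dotProduct_pvec_adjMatrix_mulVec]
  ring

end Cut

/-- `mcut(G) ≤ m - n·qₙ(G)/4`. -/
theorem stmt3 (G : SimpleGraph V) [DecidableRel G.Adj] :
    (mcut G : ℝ) ≤ (G.edgeFinset.card : ℝ) - (Fintype.card V : ℝ) * (⨅ i, (isHermitian_signlessLap G).eigenvalues i) / 4 := by
  obtain ⟨S, hS⟩ := exists_cutNum_eq_mcut G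
  have hRayleigh := iInf_eigenvalues_mul_dotProduct_self_le (isHermitian_signlessLap G) (pvec S)
  rw [dotProduct_pvec_self, dotProduct_pvec_signlessLap_mulVec, hS] at hRayleigh
  linarith
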